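/- arXiv:2110.10344 — 6 statements merged into one kernel-verified Lean document; each statement's English description precedes it below -/
import Mathlib

section
/- For any function f: [0, ∞) → ℝ with f, f', f'' ∈ L²(0, ∞) and f(0) = f'(0) = 0, and for any ε > 0 and α ≥ 0, we have ∫₀^α |f(z)|²/(z + ε)⁴ dz ≤ (16/9) ∫₀^α |f''(z)|² dz. -/
/-!
Two weighted Hardy inequalities chained together. If `g 0 = 0` and `w = z + ε`, then
`-g² / ((n+1) w^(n+1))` has derivative `g² / w^(n+2) - (2/(n+1)) g g' / w^(n+1)`, and its value at
`α` is nonpositive, so `∫ g²/w^(n+2) ≤ (2/(n+1)) ∫ g g'/w^(n+1)`. Absorbing half of the left side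
by AM-GM gives `∫ g²/w^(n+2) ≤ 4/(n+1)² ∫ g'²/w^n`. Taking `n = 2`, `g = f` and then `n = 0`,
`g = f'` yields the constant `(4/9) · 4 = 16/9`.
-/

open MeasureTheory Set

section WeightedHardy

variable {ε α : ℝ}

lemma intervalIntegrable_div_pow_add {h : ℝ → ℝ} (hh : ContinuousOn h (Icc 0 α))
    (hε : 0 < ε) (hα : 0 ≤ α) (n : ℕ) :
    IntervalIntegrable (fun z => h z / (z + ε) ^ n) volume 0 α := by
  refine ContinuousOn.intervalIntegrable ?_
  rw [uIcc_of_le hα]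
  exact hh.div (by fun_prop) fun z hz => pow_ne_zero _ (by linarith [hz.1])

lemma hasDerivAt_neg_sq_div_pow {g : ℝ → ℝ} {g' z : ℝ} (hg : HasDerivAt g g' z)
    (hz : 0 < z + ε) (n : ℕ) :
    HasDerivAt (fun z => -(g z ^ 2 / ((n + 1) * (z + ε) ^ (n + 1))))
      (g z ^ 2 / (z + ε) ^ (n + 2) - 2 / (n + 1) * (g z * g' / (z + ε) ^ (n + 1))) z := by
  have hw : HasDerivAt (fun z : ℝ => ((n : ℝ) + 1) * (z + ε) ^ (n + 1))
      ((n + 1) * ((n + 1 : ℕ) * (z + ε) ^ n * 1)) z :=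
    (((hasDerivAt_id z).add_const ε).pow (n + 1)).const_mul _
  refine ((hg.pow 2).div hw (by positivity)).neg.congr_deriv ?_
  simp only [Pi.pow_apply]
  field_simp
  push_cast
  ring

lemma two_div_mul_mul_div_pow_le {a b w : ℝ} (hw : 0 < w) (n : ℕ) :
    2 / (n + 1) * (a * b / w ^ (n + 1)) ≤
      1 / 2 * (a ^ 2 / w ^ (n + 2)) + 2 / ((n : ℝ) + 1) ^ 2 * (b ^ 2 / w ^ n) := by
  have hsq : 1 / 2 * (a ^ 2 / w ^ (n + 2)) + 2 / ((n : ℝ) + 1) ^ 2 * (b ^ 2 / w ^ n)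
      - 2 / (n + 1) * (a * b / w ^ (n + 1))
      = (a - 2 * b * w / (n + 1)) ^ 2 / (2 * w ^ (n + 2)) := by
    field_simp
    ring
  have : 0 ≤ (a - 2 * b * w / (n + 1)) ^ 2 / (2 * w ^ (n + 2)) := by positivity
  linarith

variable {g g' : ℝ → ℝ}

lemma integral_sq_div_pow_le_integral_mul_div_pow (hg : ∀ z ∈ Icc 0 α, HasDerivAt g (g' z) z)
    (hg' : ContinuousOn g' (Icc 0 α)) (hg0 : g 0 = 0) (hε : 0 < ε) (hα : 0 ≤ α) (n : ℕ) :
    ∫ z in 0..α, g z ^ 2 / (z + ε) ^ (n + 2) ≤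
      2 / (n + 1) * ∫ z in 0..α, g z * g' z / (z + ε) ^ (n + 1) := by
  have hgc : ContinuousOn g (Icc 0 α) := fun z hz => (hg z hz).continuousAt.continuousWithinAt
  have hA : IntervalIntegrable (fun z => g z ^ 2 / (z + ε) ^ (n + 2)) volume 0 α :=
    intervalIntegrable_div_pow_add (hgc.pow 2) hε hα (n + 2)
  have hM : IntervalIntegrable (fun z => g z * g' z / (z + ε) ^ (n + 1)) volume 0 α :=
    intervalIntegrable_div_pow_add (hgc.mul hg') hε hα (n + 1)
  have hderiv : ∀ z ∈ uIcc 0 α, HasDerivAt (fun z => -(g z ^ 2 / ((n + 1) * (z + ε) ^ (n + 1))))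
      (g z ^ 2 / (z + ε) ^ (n + 2) - 2 / (n + 1) * (g z * g' z / (z + ε) ^ (n + 1))) z := by
    intro z hz
    rw [uIcc_of_le hα] at hz
    exact hasDerivAt_neg_sq_div_pow (hg z hz) (by linarith [hz.1]) n
  have hftc := intervalIntegral.integral_eq_sub_of_hasDerivAt hderiv (hA.sub (hM.const_mul _))
  rw [intervalIntegral.integral_sub hA (hM.const_mul _), intervalIntegral.integral_const_mul]
    at hftc
  have hboundary : 0 ≤ g α ^ 2 / ((n + 1) * (α + ε) ^ (n + 1)) := by
    have : 0 < α + ε := by linarith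
    positivity
  simp only [hg0, ne_eq, OfNat.ofNat_ne_zero, not_false_eq_true, zero_pow, zero_div, neg_zero,
    sub_zero] at hftc
  linarith

theorem integral_sq_div_pow_le (hg : ∀ z ∈ Icc 0 α, HasDerivAt g (g' z) z)
    (hg' : ContinuousOn g' (Icc 0 α)) (hg0 : g 0 = 0) (hε : 0 < ε) (hα : 0 ≤ α) (n : ℕ) :
    ∫ z in 0..α, g z ^ 2 / (z + ε) ^ (n + 2) ≤
      4 / ((n : ℝ) + 1) ^ 2 * ∫ z in 0..α, g' z ^ 2 / (z + ε) ^ n := by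
  have hgc : ContinuousOn g (Icc 0 α) := fun z hz => (hg z hz).continuousAt.continuousWithinAt
  have hA : IntervalIntegrable (fun z => g z ^ 2 / (z + ε) ^ (n + 2)) volume 0 α :=
    intervalIntegrable_div_pow_add (hgc.pow 2) hε hα (n + 2)
  have hM : IntervalIntegrable (fun z => g z * g' z / (z + ε) ^ (n + 1)) volume 0 α :=
    intervalIntegrable_div_pow_add (hgc.mul hg') hε hα (n + 1)
  have hB : IntervalIntegrable (fun z => g' z ^ 2 / (z + ε) ^ n) volume 0 α :=
    intervalIntegrable_div_pow_add (hg'.pow 2) hε hα n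
  have hamgm : ∫ z in 0..α, 2 / (n + 1) * (g z * g' z / (z + ε) ^ (n + 1)) ≤
      ∫ z in 0..α, (1 / 2 * (g z ^ 2 / (z + ε) ^ (n + 2)) +
        2 / ((n : ℝ) + 1) ^ 2 * (g' z ^ 2 / (z + ε) ^ n)) :=
    intervalIntegral.integral_mono_on hα (hM.const_mul _)
      ((hA.const_mul _).add (hB.const_mul _))
      fun z hz => two_div_mul_mul_div_pow_le (by linarith [hz.1]) n
  rw [intervalIntegral.integral_add (hA.const_mul _) (hB.const_mul _),
    intervalIntegral.integral_const_mul, intervalIntegral.integral_const_mul,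
    intervalIntegral.integral_const_mul] at hamgm
  have hibp := integral_sq_div_pow_le_integral_mul_div_pow hg hg' hg0 hε hα n
  have hconst : 4 / ((n : ℝ) + 1) ^ 2 = 2 * (2 / ((n : ℝ) + 1) ^ 2) := by ring
  rw [hconst, mul_assoc]
  linarith

end WeightedHardy

theorem rellich_inequality_general (f : ℝ → ℝ) (hf : ContDiff ℝ 2 f)
    (hf0 : f 0 = 0) (hf'0 : deriv f 0 = 0)
    (ε : ℝ) (hε : 0 < ε) (α : ℝ) (hα : 0 ≤ α) :
    ∫ z in (0 : ℝ)..α, (f z) ^ 2 / (z + ε) ^ 4 ≤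
      (16 / 9) * ∫ z in (0 : ℝ)..α, (deriv (deriv f) z) ^ 2 := by
  have hf' : ContDiff ℝ 1 (deriv f) := hf.iterate_deriv' 1 1
  have hfirst := integral_sq_div_pow_le (g := f) (g' := deriv f)
    (fun z _ => (hf.differentiable (by norm_num) z).hasDerivAt)
    hf'.continuous.continuousOn hf0 hε hα 2
  have hsecond := integral_sq_div_pow_le (g := deriv f) (g' := deriv (deriv f))
    (fun z _ => (hf'.differentiable one_ne_zero z).hasDerivAt)
    (hf'.continuous_deriv le_rfl).continuousOn hf'0 hε hα 0
  norm_num at hfirst hsecond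
  linarith

/-- Shifted Rellich inequality (Lemma 2). -/
theorem rellich_inequality (f : ℝ → ℝ) (hf : ContDiff ℝ 2 f)
    (hfL2 : IntegrableOn (fun z => (f z) ^ 2) (Ioi (0 : ℝ)))
    (hf'L2 : IntegrableOn (fun z => (deriv f z) ^ 2) (Ioi (0 : ℝ)))
    (hf''L2 : IntegrableOn (fun z => (deriv (deriv f) z) ^ 2) (Ioi (0 : ℝ)))
    (hf0 : f 0 = 0) (hf'0 : deriv f 0 = 0)
    (ε : ℝ) (hε : 0 < ε) (α : ℝ) (hα : 0 ≤ α) :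
    ∫ z in (0 : ℝ)..α, (f z) ^ 2 / (z + ε) ^ 4 ≤
      (16 / 9) * ∫ z in (0 : ℝ)..α, (deriv (deriv f) z) ^ 2 :=
  rellich_inequality_general f hf hf0 hf'0 ε hε α hα
end

section
/- Let a, b, R, σ, δ > 0 and suppose f, g: [0, δ] → ℝ are C¹ (extended by any L² continuation) with f(0) = g(0) = 0 and f', g' ∈ L². If σδ ≤ (1/9)√(2ab/R), then ∫₀^δ [ (2a/R)|f'|² + b|g'|² - (9/2)·σδ/(z+σδ)² · f g ] dz ≥ 0. -/
/-!
With `t = z + σδ`, the potential `W = (A f² + B g²) / (2t)` (where `A = 2a/R`, `B = b`) vanishes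
at `z = 0` and is nonnegative at `z = δ`. Completing squares, the integrand dominates `W'` pointwise
as soon as `9σδ ≤ √(AB)`, the remaining cross term being absorbed by AM–GM; so the integral is at
least `W δ - W 0 ≥ 0`. This performs the paper's AM–GM step and its shifted Hardy
inequality `∫ h²/(z+σδ)² ≤ 4 ∫ h'²` in one stroke.
-/

open MeasureTheory Set

lemma two_mul_mul_le_of_abs_le_sqrt {A B k : ℝ} (hA : 0 ≤ A) (hB : 0 ≤ B)
    (hk : |k| ≤ √(A * B)) (x y : ℝ) : 2 * k * (x * y) ≤ A * x ^ 2 + B * y ^ 2 :=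
  calc 2 * k * (x * y) ≤ 2 * |k| * (|x| * |y|) := by
        have := le_abs_self (k * (x * y))
        rw [abs_mul, abs_mul] at this
        linarith
    _ ≤ 2 * √(A * B) * (|x| * |y|) := by gcongr
    _ = 2 * (√A * |x|) * (√B * |y|) := by rw [Real.sqrt_mul hA]; ring
    _ ≤ (√A * |x|) ^ 2 + (√B * |y|) ^ 2 := two_mul_le_add_sq _ _
    _ = A * x ^ 2 + B * y ^ 2 := by
        rw [mul_pow, mul_pow, Real.sq_sqrt hA, Real.sq_sqrt hB, sq_abs, sq_abs]

lemma calibration_le {A B κ : ℝ} (hA : 0 ≤ A) (hB : 0 ≤ B) (hκ : 2 * |κ| ≤ √(A * B))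
    (t x y p q : ℝ) :
    A / 2 * (2 * x * p / t - x ^ 2 / t ^ 2) + B / 2 * (2 * y * q / t - y ^ 2 / t ^ 2)
      ≤ A * p ^ 2 + B * q ^ 2 - κ / t ^ 2 * (x * y) := by
  have hxy := two_mul_mul_le_of_abs_le_sqrt (k := 2 * κ) hA hB (by rwa [abs_mul, abs_two]) x y
  -- the identity is polynomial in `t⁻¹`, so it holds also for `t = 0`
  calc _ = A * p ^ 2 + B * q ^ 2 - κ / t ^ 2 * (x * y)
        - (A * (p - x / (2 * t)) ^ 2 + B * (q - y / (2 * t)) ^ 2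
          + (t⁻¹ / 2) ^ 2 * (A * x ^ 2 + B * y ^ 2 - 2 * (2 * κ) * (x * y))) := by ring
    _ ≤ _ := by
        apply sub_le_self
        have := sub_nonneg.2 hxy
        positivity

lemma hasDerivAt_sq_div_add {f : ℝ → ℝ} {f' z : ℝ} (c : ℝ) (hf : HasDerivAt f f' z)
    (hz : z + c ≠ 0) :
    HasDerivAt (fun x => f x ^ 2 / (x + c)) (2 * f z * f' / (z + c) - f z ^ 2 / (z + c) ^ 2) z :=
  ((hf.fun_pow 2).div ((hasDerivAt_id' z).add_const c) hz).congr_deriv (by field_simp; ring)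

theorem integral_deriv_sq_sub_cross_div_sq_nonneg {A B κ c δ : ℝ} (hA : 0 ≤ A) (hB : 0 ≤ B)
    (hκ : 2 * |κ| ≤ √(A * B)) (hc : 0 < c) (hδ : 0 ≤ δ) {f g : ℝ → ℝ}
    (hf : ContDiff ℝ 1 f) (hg : ContDiff ℝ 1 g) (hf0 : f 0 = 0) (hg0 : g 0 = 0) :
    0 ≤ ∫ z in (0 : ℝ)..δ,
      (A * deriv f z ^ 2 + B * deriv g z ^ 2 - κ / (z + c) ^ 2 * (f z * g z)) := by
  have hpos : ∀ z ∈ Icc 0 δ, 0 < z + c := fun z hz => by linarith [hz.1]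
  have hW : ∀ z ∈ Icc 0 δ, HasDerivAt
      (fun x => A / 2 * (f x ^ 2 / (x + c)) + B / 2 * (g x ^ 2 / (x + c)))
      (A / 2 * (2 * f z * deriv f z / (z + c) - f z ^ 2 / (z + c) ^ 2)
        + B / 2 * (2 * g z * deriv g z / (z + c) - g z ^ 2 / (z + c) ^ 2)) z := fun z hz =>
    ((hasDerivAt_sq_div_add c (hf.differentiable one_ne_zero z).hasDerivAt
      (hpos z hz).ne').const_mul _).add
    ((hasDerivAt_sq_div_add c (hg.differentiable one_ne_zero z).hasDerivAt
      (hpos z hz).ne').const_mul _)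
  have hint : IntegrableOn (fun z => A * deriv f z ^ 2 + B * deriv g z ^ 2
      - κ / (z + c) ^ 2 * (f z * g z)) (Icc 0 δ) := by
    have := hf.continuous_deriv le_rfl
    have := hg.continuous_deriv le_rfl
    have := hf.continuous
    have := hg.continuous
    have hne : ∀ z ∈ Icc 0 δ, (z + c) ^ 2 ≠ 0 := fun z hz => pow_ne_zero 2 (hpos z hz).ne'
    exact ContinuousOn.integrableOn_Icc (by fun_prop (disch := assumption))
  have hFTC := intervalIntegral.sub_le_integral_of_hasDeriv_right_of_le hδ
    (fun z hz => (hW z hz).continuousAt.continuousWithinAt)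
    (fun z hz => (hW z (Ioo_subset_Icc_self hz)).hasDerivWithinAt) hint
    (fun z _ => calibration_le hA hB hκ _ _ _ _ _)
  have hWδ : 0 ≤ A / 2 * (f δ ^ 2 / (δ + c)) + B / 2 * (g δ ^ 2 / (δ + c)) := by
    have := hpos δ ⟨hδ, le_rfl⟩
    positivity
  simp only [hf0, hg0, zero_pow two_ne_zero, zero_div, mul_zero, add_zero, sub_zero] at hFTC
  linarith

theorem ih1_bottom_layer_nonneg_general (a b R σ δ : ℝ)
    (ha : 0 < a) (hb : 0 < b) (hR : 0 < R) (hσ : 0 < σ) (hδ : 0 < δ)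
    (f g : ℝ → ℝ) (hf : ContDiff ℝ 1 f) (hg : ContDiff ℝ 1 g)
    (hf0 : f 0 = 0) (hg0 : g 0 = 0)
    (hcond : σ * δ ≤ (1 / 9) * Real.sqrt (2 * a * b / R)) :
    (0 : ℝ) ≤ ∫ z in (0 : ℝ)..δ,
      ((2 * a / R) * (deriv f z) ^ 2 + b * (deriv g z) ^ 2
        - (9 / 2) * (σ * δ) / (z + σ * δ) ^ 2 * (f z * g z)) := by
  have hσδ : 0 < σ * δ := by positivity
  have hκ : 2 * |9 / 2 * (σ * δ)| ≤ √(2 * a / R * b) := by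
    rw [abs_of_pos (by positivity), show 2 * a / R * b = 2 * a * b / R by ring]
    linarith
  exact integral_deriv_sq_sub_cross_div_sq_nonneg (by positivity) hb.le hκ hσδ hδ.le hf hg hf0 hg0

/-- Nonnegativity of the IH1 bottom boundary layer functional. -/
theorem ih1_bottom_layer_nonneg (a b R σ δ : ℝ)
    (ha : 0 < a) (hb : 0 < b) (hR : 0 < R) (hσ : 0 < σ) (hδ : 0 < δ)
    (f g : ℝ → ℝ) (hf : ContDiff ℝ 1 f) (hg : ContDiff ℝ 1 g)
    (hf0 : f 0 = 0) (hg0 : g 0 = 0)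
    (hf'L2 : IntegrableOn (fun z => (deriv f z) ^ 2) (Ioi (0 : ℝ)))
    (hg'L2 : IntegrableOn (fun z => (deriv g z) ^ 2) (Ioi (0 : ℝ)))
    (hcond : σ * δ ≤ (1 / 9) * Real.sqrt (2 * a * b / R)) :
    (0 : ℝ) ≤ ∫ z in (0 : ℝ)..δ,
      ((2 * a / R) * (deriv f z) ^ 2 + b * (deriv g z) ^ 2
        - (9 / 2) * (σ * δ) / (z + σ * δ) ^ 2 * (f z * g z)) :=
  ih1_bottom_layer_nonneg_general a b R σ δ ha hb hR hσ hδ f g hf hg hf0 hg0 hcond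
end

section
/- Let a, b, R, σ, δ, k > 0 and suppose w: [0, δ] → ℝ is C² with w(0) = w'(0) = 0, and T ∈ L²(0, δ). If σδ ≤ (1/3)√(ab/R), then ∫₀^δ [ (a/(Rk²))|w''|² + bk²|T|² - (9/2)·σδ/(z+√(σδ))⁴·(z+√(σδ))²·w T ] dz ≥ 0, i.e. ∫₀^δ [ (a/(Rk²))|w''|² + bk²|T|² - (9/2)·σδ/(z+√(σδ))²· w T ] dz ≥ 0. -/
/-!
Shifted Rellich inequality plus AM–GM. With `p = z + s`, `s > 0`, the potential
`Φ = -(3/8) w²/p³ - (1/2) w'²/p` satisfies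
`Φ' = (9/16) w²/p⁴ - w''² + (w'' - w'/(2p))² + (w'/(2p) - 3w/(4p²))²`,
while `Φ(0) = 0` because `w(0) = w'(0) = 0` and `Φ ≤ 0`; integrating gives
`∫₀^δ w²/p⁴ ≤ (16/9) ∫₀^δ w''²`. For `s = √(σδ)` the cross term is absorbed by AM–GM,
`(9/2)(σδ/p²) w T ≤ (9/16)(a/(Rk²)) w²/p⁴ + b k² T²`, which is possible because
`9 (σδ)² ≤ ab/R`; the Rellich inequality then pays for the `w²/p⁴` term with the `w''²` term.
-/

open MeasureTheory Set intervalIntegral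

lemma two_mul_mul_le_of_sq_le_mul {α β c : ℝ} (hα : 0 < α) (hc : c ^ 2 ≤ α * β) (u t : ℝ) :
    2 * c * u * t ≤ α * u ^ 2 + β * t ^ 2 := by
  nlinarith [sq_nonneg (α * u - c * t), mul_nonneg (sub_nonneg.2 hc) (sq_nonneg t)]

lemma rellich_defect_le_layer_integrand {α β c : ℝ} (hα : 0 < α) (hc : 9 * c ^ 2 ≤ α * β)
    (p x u t : ℝ) :
    α * (x ^ 2 - 9 / 16 * (u ^ 2 / p ^ 4))
      ≤ α * x ^ 2 + β * t ^ 2 - 9 / 2 * c / p ^ 2 * (u * t) := by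
  have h := two_mul_mul_le_of_sq_le_mul (by positivity : 0 < 9 / 16 * α)
    (by linarith : (9 / 4 * c) ^ 2 ≤ 9 / 16 * α * β) (u / p ^ 2) t
  have hu : (u / p ^ 2) ^ 2 = u ^ 2 / p ^ 4 := by rw [div_pow, ← pow_mul]
  have hut : 9 / 2 * c / p ^ 2 * (u * t) = 2 * (9 / 4 * c) * (u / p ^ 2) * t := by ring
  rw [hu] at h
  rw [hut]
  linarith

lemma continuousOn_div_add_pow {f : ℝ → ℝ} (hf : Continuous f) {s δ : ℝ} (hs : 0 < s)
    (hδ : 0 ≤ δ) (n : ℕ) : ContinuousOn (fun z => f z / (z + s) ^ n) (uIcc 0 δ) := by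
  rw [uIcc_of_le hδ]
  exact hf.continuousOn.div (by fun_prop) fun z hz => pow_ne_zero n (by linarith [hz.1])

noncomputable def rellichPotential (w : ℝ → ℝ) (s z : ℝ) : ℝ :=
  -(3 / 8) * (w z ^ 2 / (z + s) ^ 3) - (1 / 2) * (deriv w z ^ 2 / (z + s))

lemma hasDerivAt_rellichPotential {w : ℝ → ℝ} (hw : ContDiff ℝ 2 w) {s z : ℝ}
    (hz : z + s ≠ 0) :
    HasDerivAt (rellichPotential w s)
      (9 / 16 * (w z ^ 2 / (z + s) ^ 4) - deriv (deriv w) z ^ 2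
        + (deriv (deriv w) z - deriv w z / (2 * (z + s))) ^ 2
        + (deriv w z / (2 * (z + s)) - 3 * w z / (4 * (z + s) ^ 2)) ^ 2) z := by
  have hw' : HasDerivAt w (deriv w z) z :=
    (hw.differentiable (by norm_num)).differentiableAt.hasDerivAt
  have hw'' : HasDerivAt (deriv w) (deriv (deriv w) z) z :=
    ((hw.deriv' (n := 1)).differentiable one_ne_zero).differentiableAt.hasDerivAt
  have hp : HasDerivAt (fun z => z + s) 1 z := (hasDerivAt_id z).add_const s
  have h₁ : HasDerivAt (fun z => w z ^ 2 / (z + s) ^ 3) _ z :=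
    (hw'.fun_pow 2).div (hp.fun_pow 3) (pow_ne_zero 3 hz)
  have h₂ : HasDerivAt (fun z => deriv w z ^ 2 / (z + s)) _ z := (hw''.fun_pow 2).div hp hz
  refine ((h₁.const_mul (-(3 / 8))).sub (h₂.const_mul (1 / 2))).congr_deriv ?_
  field_simp
  ring

theorem integral_sq_div_add_pow_four_le {w : ℝ → ℝ} (hw : ContDiff ℝ 2 w) (hw0 : w 0 = 0)
    (hw'0 : deriv w 0 = 0) {s δ : ℝ} (hs : 0 < s) (hδ : 0 ≤ δ) :
    ∫ z in 0..δ, w z ^ 2 / (z + s) ^ 4 ≤ 16 / 9 * ∫ z in 0..δ, deriv (deriv w) z ^ 2 := by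
  have hΦ : ∀ z ∈ Icc 0 δ, HasDerivAt (rellichPotential w s) _ z :=
    fun z hz => hasDerivAt_rellichPotential hw (by linarith [hz.1])
  have hint₁ : IntervalIntegrable (fun z => w z ^ 2 / (z + s) ^ 4) volume 0 δ :=
    (continuousOn_div_add_pow (hw.continuous.pow 2) hs hδ 4).intervalIntegrable
  have hint₂ : IntervalIntegrable (fun z => deriv (deriv w) z ^ 2) volume 0 δ :=
    (((hw.deriv' (n := 1)).continuous_deriv le_rfl).pow 2).intervalIntegrable 0 δ
  have hFTC : ∫ z in 0..δ, (9 / 16 * (w z ^ 2 / (z + s) ^ 4) - deriv (deriv w) z ^ 2)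
      ≤ rellichPotential w s δ - rellichPotential w s 0 :=
    integral_le_sub_of_hasDeriv_right_of_le hδ
      (fun z hz => (hΦ z hz).continuousAt.continuousWithinAt)
      (fun z hz => (hΦ z (Ioo_subset_Icc_self hz)).hasDerivWithinAt)
      ((intervalIntegrable_iff_integrableOn_Icc_of_le hδ).1 ((hint₁.const_mul _).sub hint₂))
      fun z _ => le_add_of_le_of_nonneg (le_add_of_nonneg_right (sq_nonneg _)) (sq_nonneg _)
  have hΦ0 : rellichPotential w s 0 = 0 := by simp [rellichPotential, hw0, hw'0]
  have hΦδ : rellichPotential w s δ ≤ 0 := by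
    have : 0 < δ + s := by linarith
    have : 0 ≤ w δ ^ 2 / (δ + s) ^ 3 := by positivity
    have : 0 ≤ deriv w δ ^ 2 / (δ + s) := by positivity
    unfold rellichPotential
    linarith
  rw [integral_sub (hint₁.const_mul _) hint₂, intervalIntegral.integral_const_mul] at hFTC
  linarith

lemma intervalIntegrable_div_add_sq_mul {w T : ℝ → ℝ} (hw : Continuous w) {s δ : ℝ}
    (hs : 0 < s) (hδ : 0 ≤ δ) (hT : IntervalIntegrable T volume 0 δ) (C : ℝ) :
    IntervalIntegrable (fun z => C / (z + s) ^ 2 * (w z * T z)) volume 0 δ := by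
  have hg : ContinuousOn (fun z => C * (w z / (z + s) ^ 2)) (uIcc 0 δ) :=
    continuousOn_const.mul (continuousOn_div_add_pow hw hs hδ 2)
  convert hT.continuousOn_mul hg using 2 with z
  ring

theorem ih3_bottom_layer_nonneg_general (a b R σ δ k : ℝ)
    (ha : 0 < a) (hR : 0 < R) (hσ : 0 < σ) (hδ : 0 < δ) (hk : 0 < k)
    (w T : ℝ → ℝ) (hw : ContDiff ℝ 2 w)
    (hw0 : w 0 = 0) (hw'0 : deriv w 0 = 0)
    (hT : IntervalIntegrable T volume 0 δ)
    (hT2 : IntervalIntegrable (fun z => (T z) ^ 2) volume 0 δ)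
    (hcond : σ * δ ≤ (1 / 3) * Real.sqrt (a * b / R)) :
    (0 : ℝ) ≤ ∫ z in (0 : ℝ)..δ,
      ((a / (R * k ^ 2)) * (deriv (deriv w) z) ^ 2 + b * k ^ 2 * (T z) ^ 2
        - (9 / 2) * (σ * δ) / (z + Real.sqrt (σ * δ)) ^ 2 * (w z * T z)) := by
  set c := σ * δ
  set s := Real.sqrt c
  set α := a / (R * k ^ 2)
  have hs : 0 < s := Real.sqrt_pos.2 (by positivity)
  have hα : 0 < α := by positivity
  have hcα : 9 * c ^ 2 ≤ α * (b * k ^ 2) := by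
    have h : (3 * c) ^ 2 ≤ a * b / R := (Real.le_sqrt' (by positivity)).1 (by linarith)
    have hαβ : α * (b * k ^ 2) = a * b / R := by simp only [α]; field_simp
    linarith
  have hint₁ : IntervalIntegrable (fun z => w z ^ 2 / (z + s) ^ 4) volume 0 δ :=
    (continuousOn_div_add_pow (hw.continuous.pow 2) hs hδ.le 4).intervalIntegrable
  have hint₂ : IntervalIntegrable (fun z => deriv (deriv w) z ^ 2) volume 0 δ :=
    (((hw.deriv' (n := 1)).continuous_deriv le_rfl).pow 2).intervalIntegrable 0 δ
  have hrellich := integral_sq_div_add_pow_four_le hw hw0 hw'0 hs hδ.le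
  calc 0 ≤ α * ((∫ z in 0..δ, deriv (deriv w) z ^ 2)
          - 9 / 16 * ∫ z in 0..δ, w z ^ 2 / (z + s) ^ 4) :=
        mul_nonneg hα.le (by linarith)
    _ = ∫ z in 0..δ, α * (deriv (deriv w) z ^ 2 - 9 / 16 * (w z ^ 2 / (z + s) ^ 4)) := by
        rw [intervalIntegral.integral_const_mul, integral_sub hint₂ (hint₁.const_mul _),
          intervalIntegral.integral_const_mul]
    _ ≤ _ := integral_mono_on hδ.le ((hint₂.sub (hint₁.const_mul _)).const_mul _)
        (((hint₂.const_mul _).add (hT2.const_mul _)).sub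
          (intervalIntegrable_div_add_sq_mul hw.continuous hs hδ.le hT _))
        fun z _ => rellich_defect_le_layer_integrand hα hcα _ _ _ _

/-- Nonnegativity of the IH3 bottom boundary layer functional. -/
theorem ih3_bottom_layer_nonneg (a b R σ δ k : ℝ)
    (ha : 0 < a) (hb : 0 < b) (hR : 0 < R) (hσ : 0 < σ) (hδ : 0 < δ) (hk : 0 < k)
    (w T : ℝ → ℝ) (hw : ContDiff ℝ 2 w)
    (hw0 : w 0 = 0) (hw'0 : deriv w 0 = 0)
    (hT : IntervalIntegrable T volume 0 δ)
    (hT2 : IntervalIntegrable (fun z => (T z) ^ 2) volume 0 δ)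
    (hcond : σ * δ ≤ (1 / 3) * Real.sqrt (a * b / R)) :
    (0 : ℝ) ≤ ∫ z in (0 : ℝ)..δ,
      ((a / (R * k ^ 2)) * (deriv (deriv w) z) ^ 2 + b * k ^ 2 * (T z) ^ 2
        - (9 / 2) * (σ * δ) / (z + Real.sqrt (σ * δ)) ^ 2 * (w z * T z)) :=
  ih3_bottom_layer_nonneg_general a b R σ δ k ha hR hσ hδ hk w T hw hw0 hw'0 hT hT2 hcond
end

section
/- Let a, b, R, σ, γ, k > 0 and w: [1-γ, 1] → ℝ be C² with w(1) = w'(1) = 0 and T ∈ L²(1-γ, 1). If (σ + a)γ ≤ 6√(ab/R), then ∫_{1-γ}^1 [ (a/(Rk²))|w''|² + bk²|T|² - ((σ+a)/γ) w T ] dz ≥ 0. -/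
/-!
Since `w` and `w'` vanish at the top, Taylor's formula gives `w z = ∫_z^1 (s - z) w'' s ds`, so by
Cauchy–Schwarz `w z ^ 2 ≤ (1 - z)^3 / 3 * ∫ |w''|²`, and integrating, `∫ w² ≤ γ⁴/12 ∫ |w''|²`.
Completing the square in `T` bounds the functional below by `(a/(Rk²) - q²γ⁴/(48bk²)) ∫ |w''|²`
with `q = (σ + a)/γ`, which is nonnegative exactly when `((σ + a)γ)² ≤ 48ab/R`; the hypothesis
gives this with the constant 36.
-/

open MeasureTheory Set

theorem integral_mul_sq_le_integral_sq_mul_integral_sq {α : Type*} [MeasurableSpace α]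
    {μ : Measure α} {f g : α → ℝ} (hf : Integrable (fun x => f x ^ 2) μ)
    (hg : Integrable (fun x => g x ^ 2) μ) (hfg : Integrable (fun x => f x * g x) μ) :
    (∫ x, f x * g x ∂μ) ^ 2 ≤ (∫ x, f x ^ 2 ∂μ) * ∫ x, g x ^ 2 ∂μ := by
  have hquad : ∀ t : ℝ, 0 ≤ (∫ x, f x ^ 2 ∂μ) * (t * t) + 2 * (∫ x, f x * g x ∂μ) * t
      + ∫ x, g x ^ 2 ∂μ := fun t => by
    have hexpand : ∫ x, (t * f x + g x) ^ 2 ∂μ = (∫ x, f x ^ 2 ∂μ) * (t * t)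
        + 2 * (∫ x, f x * g x ∂μ) * t + ∫ x, g x ^ 2 ∂μ := by
      simp_rw [fun x => show (t * f x + g x) ^ 2
        = t * t * f x ^ 2 + 2 * t * (f x * g x) + g x ^ 2 by ring]
      rw [integral_add (f := fun x => t * t * f x ^ 2 + 2 * t * (f x * g x))
          ((hf.const_mul _).add (hfg.const_mul _)) hg,
        integral_add (hf.const_mul _) (hfg.const_mul _), integral_const_mul, integral_const_mul]
      ring
    exact hexpand ▸ integral_nonneg fun x => sq_nonneg _
  have := discrim_le_zero hquad
  rw [discrim] at this
  nlinarith

theorem ContDiff.eq_taylor_integral_remainder {w : ℝ → ℝ} (hw : ContDiff ℝ 2 w) (c z : ℝ) :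
    w z = w c - (c - z) * deriv w c + ∫ s in z..c, (s - z) * deriv (deriv w) s := by
  have hw' : ContDiff ℝ 1 (deriv w) := hw.iterate_deriv' 1 1
  have hwd : Differentiable ℝ w := hw.differentiable (by norm_num)
  have hw'd : Differentiable ℝ (deriv w) := hw'.differentiable one_ne_zero
  have hparts := intervalIntegral.integral_mul_deriv_eq_deriv_mul
    (u := fun s => s - z) (u' := fun _ => 1) (a := z) (b := c)
    (fun x _ => (hasDerivAt_id x).sub_const z) (fun x _ => (hw'd x).hasDerivAt)
    intervalIntegrable_const ((hw'.continuous_deriv le_rfl).intervalIntegrable _ _)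
  simp only [one_mul] at hparts
  rw [hparts, intervalIntegral.integral_deriv_eq_sub (fun x _ => hwd x)
    (hw'.continuous.intervalIntegrable _ _)]
  ring

theorem intervalIntegral.sq_integral_mul_le {f g : ℝ → ℝ} {u v : ℝ} (huv : u ≤ v)
    (hf : Continuous f) (hg : Continuous g) :
    (∫ s in u..v, f s * g s) ^ 2 ≤ (∫ s in u..v, f s ^ 2) * ∫ s in u..v, g s ^ 2 := by
  simp only [intervalIntegral.integral_of_le huv]
  exact integral_mul_sq_le_integral_sq_mul_integral_sq
    (((hf.pow 2).intervalIntegrable u v).1) (((hg.pow 2).intervalIntegrable u v).1)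
    (((hf.mul hg).intervalIntegrable u v).1)

theorem sq_le_of_eq_zero_of_deriv_eq_zero {w : ℝ → ℝ} (hw : ContDiff ℝ 2 w) {c z : ℝ}
    (hc : w c = 0) (hc' : deriv w c = 0) (hz : z ≤ c) :
    w z ^ 2 ≤ (c - z) ^ 3 / 3 * ∫ s in z..c, deriv (deriv w) s ^ 2 := by
  have hmoment : ∫ s in z..c, (s - z) ^ 2 = (c - z) ^ 3 / 3 := by
    norm_num [intervalIntegral.integral_comp_sub_right (fun s => s ^ 2) z]
  calc w z ^ 2 = (∫ s in z..c, (s - z) * deriv (deriv w) s) ^ 2 := by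
        rw [hw.eq_taylor_integral_remainder c z, hc, hc']; ring
    _ ≤ (∫ s in z..c, (s - z) ^ 2) * ∫ s in z..c, deriv (deriv w) s ^ 2 :=
        intervalIntegral.sq_integral_mul_le hz (by fun_prop) (hw.iterate_deriv' 0 2).continuous
    _ = _ := by rw [hmoment]

theorem integral_sq_le_of_eq_zero_of_deriv_eq_zero {w : ℝ → ℝ} (hw : ContDiff ℝ 2 w) {c γ : ℝ}
    (hc : w c = 0) (hc' : deriv w c = 0) (hγ : 0 ≤ γ) :
    ∫ z in (c - γ)..c, w z ^ 2 ≤ γ ^ 4 / 12 * ∫ z in (c - γ)..c, deriv (deriv w) z ^ 2 := by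
  set I := ∫ z in (c - γ)..c, deriv (deriv w) z ^ 2
  have hw'' : Continuous (deriv (deriv w)) := (hw.iterate_deriv' 0 2).continuous
  have hpointwise : ∀ z ∈ Icc (c - γ) c, w z ^ 2 ≤ (c - z) ^ 3 / 3 * I := fun z hz =>
    (sq_le_of_eq_zero_of_deriv_eq_zero hw hc hc' hz.2).trans <|
      mul_le_mul_of_nonneg_left
        (intervalIntegral.integral_mono_interval hz.1 hz.2 le_rfl
          (.of_forall fun _ => sq_nonneg _) ((hw''.pow 2).intervalIntegrable _ _))
        (by linarith [pow_nonneg (sub_nonneg.2 hz.2) 3])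
  calc ∫ z in (c - γ)..c, w z ^ 2 ≤ ∫ z in (c - γ)..c, (c - z) ^ 3 / 3 * I :=
        intervalIntegral.integral_mono_on (by linarith)
          ((hw.continuous.pow 2).intervalIntegrable _ _)
          ((by fun_prop : Continuous fun z => (c - z) ^ 3 / 3 * I).intervalIntegrable _ _)
          hpointwise
    _ = γ ^ 4 / 12 * I := by
        rw [intervalIntegral.integral_mul_const, intervalIntegral.integral_div,
          intervalIntegral.integral_comp_sub_left (fun z => z ^ 3), integral_pow]
        ring

theorem intervalIntegral.mul_integral_sq_sub_le_integral_quadratic {u v α β q : ℝ} (huv : u ≤ v)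
    (hβ : 0 < β) {g w T : ℝ → ℝ} (hg : IntervalIntegrable (fun z => g z ^ 2) volume u v)
    (hw : IntervalIntegrable (fun z => w z ^ 2) volume u v)
    (hT : IntervalIntegrable (fun z => T z ^ 2) volume u v)
    (hwT : IntervalIntegrable (fun z => w z * T z) volume u v) :
    α * (∫ z in u..v, g z ^ 2) - q ^ 2 / (4 * β) * ∫ z in u..v, w z ^ 2
      ≤ ∫ z in u..v, (α * g z ^ 2 + β * T z ^ 2 - q * (w z * T z)) := by
  rw [← intervalIntegral.integral_const_mul, ← intervalIntegral.integral_const_mul,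
    ← intervalIntegral.integral_sub (hg.const_mul α) (hw.const_mul _)]
  refine intervalIntegral.integral_mono_on huv ((hg.const_mul α).sub (hw.const_mul _))
    (((hg.const_mul α).add (hT.const_mul β)).sub (hwT.const_mul q)) fun z _ => ?_
  have hcomplete_square : α * g z ^ 2 + β * T z ^ 2 - q * (w z * T z)
      = α * g z ^ 2 - q ^ 2 / (4 * β) * w z ^ 2 + β * (T z - q / (2 * β) * w z) ^ 2 := by
    field_simp
    ring
  rw [hcomplete_square]
  nlinarith [mul_nonneg hβ.le (sq_nonneg (T z - q / (2 * β) * w z))]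

/-- Nonnegativity of the IH3 top boundary layer functional. -/
theorem ih3_top_layer_nonneg (a b R σ γ k : ℝ)
    (ha : 0 < a) (hb : 0 < b) (hR : 0 < R) (hσ : 0 < σ) (hγ : 0 < γ) (hk : 0 < k)
    (w T : ℝ → ℝ) (hw : ContDiff ℝ 2 w)
    (hw1 : w 1 = 0) (hw'1 : deriv w 1 = 0)
    (hT : IntervalIntegrable T volume (1 - γ) 1)
    (hT2 : IntervalIntegrable (fun z => (T z) ^ 2) volume (1 - γ) 1)
    (hcond : (σ + a) * γ ≤ 6 * Real.sqrt (a * b / R)) :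
    (0 : ℝ) ≤ ∫ z in (1 - γ)..(1 : ℝ),
      ((a / (R * k ^ 2)) * (deriv (deriv w) z) ^ 2 + b * k ^ 2 * (T z) ^ 2
        - ((σ + a) / γ) * (w z * T z)) := by
  have hw'' : Continuous (deriv (deriv w)) := (hw.iterate_deriv' 0 2).continuous
  have hsq : ((σ + a) * γ) ^ 2 * R ≤ 36 * (a * b) := by
    rw [← le_div_iff₀ hR, mul_div_assoc]
    calc _ ≤ (6 * √(a * b / R)) ^ 2 := pow_le_pow_left₀ (by positivity) hcond 2
      _ = 36 * (a * b / R) := by rw [mul_pow, Real.sq_sqrt (by positivity)]; norm_num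
  have hcoef : ((σ + a) / γ) ^ 2 / (4 * (b * k ^ 2)) * (γ ^ 4 / 12) ≤ a / (R * k ^ 2) := by
    rw [div_mul_eq_mul_div, div_le_div_iff₀ (by positivity) (by positivity), div_pow]
    field_simp
    nlinarith [mul_pos (mul_pos ha hb) (pow_pos hk 2)]
  refine le_trans ?_ (intervalIntegral.mul_integral_sq_sub_le_integral_quadratic (by linarith)
    (by positivity) ((hw''.pow 2).intervalIntegrable _ _)
    ((hw.continuous.pow 2).intervalIntegrable _ _) hT2
    (hT.continuousOn_mul hw.continuous.continuousOn))
  have hpoincare := integral_sq_le_of_eq_zero_of_deriv_eq_zero hw hw1 hw'1 hγ.le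
  have hI : 0 ≤ ∫ z in (1 - γ)..1, deriv (deriv w) z ^ 2 :=
    intervalIntegral.integral_nonneg (by linarith) fun _ _ => sq_nonneg _
  refine sub_nonneg.2 ?_
  calc _ ≤ ((σ + a) / γ) ^ 2 / (4 * (b * k ^ 2)) * (γ ^ 4 / 12 * _) :=
        mul_le_mul_of_nonneg_left hpoincare (by positivity)
    _ = ((σ + a) / γ) ^ 2 / (4 * (b * k ^ 2)) * (γ ^ 4 / 12) * _ := by ring
    _ ≤ _ := mul_le_mul_of_nonneg_right hcoef hI
end

section
/- For R ≥ 2^(21/2)·3^(-7/2), the parameters a = σ = exp(-2^(8/5)·3^(8/5)·R^(3/5)), b = 2^(7/5)·3^(6/5)·R^(1/5)·exp(-2^(8/5)·3^(8/5)·R^(3/5)), δ = γ = 2^(6/5)·3^(-7/5)·R^(-2/5) satisfy all of: a, b, σ, δ, γ ≤ 1; 8aδ ≤ σ; γ(σ+a) ≤ 4√(2ab/R); σδ ≤ (1/9)√(2ab/R); b/6 ≤ -(1/4)σδ log σ; and 2(σ+a)²/(bγ) ≤ -(1/4)σδ log σ. -/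
/-! All exponents are multiples of `1/5`, so with `p = 2^(1/5)`, `q = 3^(1/5)`, `s = R^(1/5)` every
constraint becomes a comparison of monomials in `p, q, s` and `σ = exp (-p⁸q⁸s³)`, settled by
`p⁵ = 2` and `q⁵ = 3`. The lower bound on `R` is exactly the sublayer condition `8δ ≤ 1`. Moreover
`√(2ab/R) = 9σδ`, so the bottom-layer condition holds with equality, and the two left-hand sides
`b/6` and `2(σ+a)²/(bγ)` of the optimisation inequalities coincide, both being
`2^(2/5) 3^(1/5) R^(1/5) σ`, against `-σδ log σ / 4 = 2^(4/5) 3^(1/5) R^(1/5) σ`. -/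

open Real

lemma exists_rpow_div_eq_rpow {x : ℝ} (hx : 0 ≤ x) (m : ℝ) :
    ∃ r, 0 ≤ r ∧ ∀ y, x ^ (y / m) = r ^ y :=
  ⟨x ^ (1 / m), by positivity, fun y => by rw [← rpow_mul hx, one_div_mul_eq_div]⟩

lemma mul_exp_neg_le_one {x y : ℝ} (h : x ≤ y) : x * exp (-y) ≤ 1 :=
  calc x * exp (-y) ≤ exp y * exp (-y) := by
        gcongr; linarith [add_one_le_exp y]
    _ = 1 := by rw [← exp_add, add_neg_cancel, exp_zero]

namespace IH1

variable {p q s σ : ℝ}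

lemma eight_mul_pow_six_le (hp : p ^ 5 = 2) (hq : q ^ 5 = 3) (hq0 : 0 ≤ q)
    (hR : 2 ^ 21 ≤ 3 ^ 7 * (s ^ 5) ^ 2) : 8 * p ^ 6 ≤ q ^ 7 * s ^ 2 := by
  refine le_of_pow_le_pow_left₀ (n := 5) (by norm_num) (by positivity) ?_
  calc (8 * p ^ 6) ^ 5 = 2 ^ 15 * (p ^ 5) ^ 6 := by ring
    _ = 2 ^ 21 := by rw [hp]; norm_num
    _ ≤ 3 ^ 7 * (s ^ 5) ^ 2 := hR
    _ = (q ^ 7 * s ^ 2) ^ 5 := by rw [← hq]; ring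

lemma sqrt_two_mul_mul_div_pow_five (hp : p ^ 5 = 2) (hq : q ^ 5 = 3) (hq0 : 0 < q)
    (hs : s ≠ 0) (hσ : 0 ≤ σ) :
    √(2 * σ * (p ^ 7 * q ^ 6 * s * σ) / s ^ 5) = 9 * σ * (p ^ 6 * (q ^ 7)⁻¹ * (s ^ 2)⁻¹) := by
  rw [← sqrt_sq (by positivity : 0 ≤ 9 * σ * (p ^ 6 * (q ^ 7)⁻¹ * (s ^ 2)⁻¹))]
  congr 1
  field_simp
  linear_combination 2 * σ ^ 2 * p ^ 7 * (q ^ 15 + 3 * q ^ 10 + 9 * q ^ 5 + 27) * hq -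
    81 * σ ^ 2 * p ^ 7 * hp

lemma b_div_six_eq (hp : p ^ 5 = 2) (hq : q ^ 5 = 3) :
    p ^ 7 * q ^ 6 * s * σ / 6 = p ^ 2 * q * s * σ := by
  linear_combination (p ^ 2 * q ^ 6 * s * σ / 6) * hp + (p ^ 2 * q * s * σ / 3) * hq

lemma two_mul_sq_div_eq (hp : p ^ 5 = 2) (hp0 : p ≠ 0) (hq0 : q ≠ 0) (hs : s ≠ 0)
    (hσ : σ ≠ 0) :
    2 * (σ + σ) ^ 2 / (p ^ 7 * q ^ 6 * s * σ * (p ^ 6 * (q ^ 7)⁻¹ * (s ^ 2)⁻¹)) =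
      p ^ 2 * q * s * σ := by
  field_simp
  linear_combination -(p ^ 10 + 2 * p ^ 5 + 4) * hp

lemma neg_quarter_mul_mul_neg_eq (hp : p ^ 5 = 2) (hq0 : q ≠ 0) (hs : s ≠ 0) :
    -(1 / 4) * (σ * (p ^ 6 * (q ^ 7)⁻¹ * (s ^ 2)⁻¹)) * -(p ^ 8 * q ^ 8 * s ^ 3) =
      p ^ 4 * q * s * σ := by
  field_simp
  linear_combination σ * (p ^ 9 + 2 * p ^ 4) * hp

theorem constraints_of_fifth_roots {a b σ δ γ : ℝ} (hp : p ^ 5 = 2) (hq : q ^ 5 = 3)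
    (hp0 : 0 ≤ p) (hq0 : 0 ≤ q) (hs0 : 0 ≤ s) (hR : 2 ^ 21 ≤ 3 ^ 7 * (s ^ 5) ^ 2)
    (ha : a = exp (-(p ^ 8 * q ^ 8 * s ^ 3))) (hσ : σ = exp (-(p ^ 8 * q ^ 8 * s ^ 3)))
    (hb : b = p ^ 7 * q ^ 6 * s * exp (-(p ^ 8 * q ^ 8 * s ^ 3)))
    (hδ : δ = p ^ 6 * (q ^ 7)⁻¹ * (s ^ 2)⁻¹) (hγ : γ = p ^ 6 * (q ^ 7)⁻¹ * (s ^ 2)⁻¹) :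
    a ≤ 1 ∧ b ≤ 1 ∧ σ ≤ 1 ∧ δ ≤ 1 ∧ γ ≤ 1 ∧
    8 * a * δ ≤ σ ∧
    γ * (σ + a) ≤ 4 * √(2 * a * b / s ^ 5) ∧
    σ * δ ≤ (1 / 9) * √(2 * a * b / s ^ 5) ∧
    b / 6 ≤ -(1 / 4) * (σ * δ) * log σ ∧
    2 * (σ + a) ^ 2 / (b * γ) ≤ -(1 / 4) * (σ * δ) * log σ := by
  have one_le_of_pow_five {x : ℝ} (hx : 0 ≤ x) (h : 1 ≤ x ^ 5) : 1 ≤ x :=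
    (one_le_pow_iff_of_nonneg hx (by norm_num)).1 h
  have hp1 : 1 ≤ p := one_le_of_pow_five hp0 (by rw [hp]; norm_num)
  have hq1 : 1 ≤ q := one_le_of_pow_five hq0 (by rw [hq]; norm_num)
  have hs1 : 1 ≤ s := one_le_of_pow_five hs0 (by nlinarith [pow_nonneg hs0 5])
  have hsub := eight_mul_pow_six_le hp hq hq0 hR
  have hb1 : p ^ 7 * q ^ 6 * s * exp (-(p ^ 8 * q ^ 8 * s ^ 3)) ≤ 1 := by
    refine mul_exp_neg_le_one ?_
    calc p ^ 7 * q ^ 6 * s ≤ p ^ 8 * q ^ 8 * s := by gcongr <;> norm_num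
      _ ≤ p ^ 8 * q ^ 8 * s ^ 3 := by gcongr; exact le_self_pow₀ hs1 (by norm_num)
  subst ha hσ hb hδ hγ
  rw [log_exp]
  have hσ0 : 0 < exp (-(p ^ 8 * q ^ 8 * s ^ 3)) := exp_pos _
  have hσ1 : exp (-(p ^ 8 * q ^ 8 * s ^ 3)) ≤ 1 := exp_le_one_iff.2 (neg_nonpos.2 (by positivity))
  generalize exp (-(p ^ 8 * q ^ 8 * s ^ 3)) = σ at *
  have hsne : s ≠ 0 := by positivity
  have hqne : q ≠ 0 := by positivity
  rw [sqrt_two_mul_mul_div_pow_five hp hq (by positivity) hsne hσ0.le,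
    neg_quarter_mul_mul_neg_eq hp hqne hsne, b_div_six_eq hp hq,
    two_mul_sq_div_eq hp (by positivity) hqne hsne hσ0.ne']
  have hδ0 : 0 ≤ p ^ 6 * (q ^ 7)⁻¹ * (s ^ 2)⁻¹ := by positivity
  have hδ8 : 8 * (p ^ 6 * (q ^ 7)⁻¹ * (s ^ 2)⁻¹) ≤ 1 := by
    calc 8 * (p ^ 6 * (q ^ 7)⁻¹ * (s ^ 2)⁻¹) = 8 * p ^ 6 / (q ^ 7 * s ^ 2) := by ring
      _ ≤ 1 := (div_le_one (by positivity)).2 hsub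
  generalize p ^ 6 * (q ^ 7)⁻¹ * (s ^ 2)⁻¹ = δ at *
  have hp24 : p ^ 2 * q * s * σ ≤ p ^ 4 * q * s * σ := by gcongr; norm_num
  refine ⟨hσ1, hb1, hσ1, by linarith, by linarith, by nlinarith, by nlinarith, by linarith,
    hp24, hp24⟩

end IH1

/-- The IH1 parameter choices satisfy all the constraints of the proof. -/
theorem ih1_parameter_choices (R a b σ δ γ : ℝ)
    (hR : (2 : ℝ) ^ ((21 : ℝ) / 2) * (3 : ℝ) ^ (-(7 : ℝ) / 2) ≤ R)
    (ha : a = Real.exp (-((2 : ℝ) ^ ((8 : ℝ) / 5) * (3 : ℝ) ^ ((8 : ℝ) / 5) * R ^ ((3 : ℝ) / 5))))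
    (hσ : σ = Real.exp (-((2 : ℝ) ^ ((8 : ℝ) / 5) * (3 : ℝ) ^ ((8 : ℝ) / 5) * R ^ ((3 : ℝ) / 5))))
    (hb : b = (2 : ℝ) ^ ((7 : ℝ) / 5) * (3 : ℝ) ^ ((6 : ℝ) / 5) * R ^ ((1 : ℝ) / 5) *
      Real.exp (-((2 : ℝ) ^ ((8 : ℝ) / 5) * (3 : ℝ) ^ ((8 : ℝ) / 5) * R ^ ((3 : ℝ) / 5))))
    (hδ : δ = (2 : ℝ) ^ ((6 : ℝ) / 5) * (3 : ℝ) ^ (-(7 : ℝ) / 5) * R ^ (-(2 : ℝ) / 5))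
    (hγ : γ = (2 : ℝ) ^ ((6 : ℝ) / 5) * (3 : ℝ) ^ (-(7 : ℝ) / 5) * R ^ (-(2 : ℝ) / 5)) :
    a ≤ 1 ∧ b ≤ 1 ∧ σ ≤ 1 ∧ δ ≤ 1 ∧ γ ≤ 1 ∧
    8 * a * δ ≤ σ ∧
    γ * (σ + a) ≤ 4 * Real.sqrt (2 * a * b / R) ∧
    σ * δ ≤ (1 / 9) * Real.sqrt (2 * a * b / R) ∧
    b / 6 ≤ -(1 / 4) * (σ * δ) * Real.log σ ∧
    2 * (σ + a) ^ 2 / (b * γ) ≤ -(1 / 4) * (σ * δ) * Real.log σ := by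
  have hR0 : 0 ≤ R := (by positivity : (0 : ℝ) ≤ _).trans hR
  have hR2 : (2 : ℝ) ^ 21 ≤ 3 ^ 7 * R ^ 2 := by
    have h := pow_le_pow_left₀ (by positivity) hR 2
    rw [mul_pow, ← rpow_mul_natCast zero_le_two, ← rpow_mul_natCast zero_le_three] at h
    norm_num at h
    linarith
  obtain ⟨p, hp0, hp⟩ := exists_rpow_div_eq_rpow zero_le_two 5
  obtain ⟨q, hq0, hq⟩ := exists_rpow_div_eq_rpow zero_le_three 5
  obtain ⟨s, hs0, hs⟩ := exists_rpow_div_eq_rpow hR0 5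
  have hp5 : p ^ 5 = 2 := by simpa using (hp 5).symm
  have hq5 : q ^ 5 = 3 := by simpa using (hq 5).symm
  have hRs : R = s ^ 5 := by simpa using hs 5
  simp only [hp, hq, hs, rpow_neg hq0, rpow_neg hs0, rpow_ofNat, rpow_one] at ha hσ hb hδ hγ
  subst hRs
  exact IH1.constraints_of_fifth_roots hp5 hq5 hp0 hq0 hs0 hR2 ha hσ hb hδ hγ
end

section
/- For R ≥ 2^(19/2)·3^(-3/2), the parameters a = σ = 2^(4/5)·3^(-3/5)·R^(-2/5)·exp(-2^(14/5)·3^(2/5)·R^(3/5)), b = 2^(12/5)·3^(1/5)·R^(-1/5)·exp(-2^(14/5)·3^(2/5)·R^(3/5)), δ = γ = 2^(4/5)·3^(-3/5)·R^(-2/5) satisfy: a, b, σ, δ, γ ≤ 1; 8aδ ≤ σ; (σ+a)γ ≤ 6√(ab/R); σδ ≤ (1/3)√(ab/R); b/6 ≤ -(1/8)σδ log(σ/δ); and 2(σ+a)²/(bγ) ≤ -(1/8)σδ log(σ/δ). -/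
/-!
Write `x = 2^(4/5) 3^(-3/5) R^(-2/5)`, `y = 2^(12/5) 3^(1/5) R^(-1/5)` and
`K = 2^(14/5) 3^(2/5) R^(3/5)`, so that `δ = γ = x`, `a = σ = x e^(-K)` and `b = y e^(-K)`.
Then `σ / δ = e^(-K)`, and comparing exponents of `2`, `3` and `R` gives the exact relations
`y = 9 x³ R`, `4 y = 3 x² K` and `x y K = 64`. The first makes `√(ab/R) = 3 x² e^(-K)`, and the
other two turn both optimization inequalities (5.6) into equalities. Everything else reduces to
`x ≤ 1/8` (for `b ≤ 1` via `y ≤ K ≤ e^K`), which is precisely the lower bound on `R`.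
-/

open Real

namespace IH3

/-- The constraints of the IH3 proof: boundedness (5.2), the sublayer condition (5.9), the top
(5.16) and bottom (5.20) boundary spectral conditions, and the two optimization inequalities (5.6). -/
def Constraints (R a b σ δ γ : ℝ) : Prop :=
  a ≤ 1 ∧ b ≤ 1 ∧ σ ≤ 1 ∧ δ ≤ 1 ∧ γ ≤ 1 ∧
    8 * a * δ ≤ σ ∧
    (σ + a) * γ ≤ 6 * √(a * b / R) ∧
    σ * δ ≤ (1 / 3) * √(a * b / R) ∧
    b / 6 ≤ -(1 / 8) * (σ * δ) * log (σ / δ) ∧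
    2 * (σ + a) ^ 2 / (b * γ) ≤ -(1 / 8) * (σ * δ) * log (σ / δ)

theorem constraints_of_relations {R x y K : ℝ} (hR : 0 < R) (hx : 0 < x) (hx8 : x ≤ 1 / 8)
    (hyR : y = 9 * x ^ 3 * R) (hyK : 4 * y = 3 * x ^ 2 * K) (hxyK : x * y * K = 64) :
    Constraints R (x * exp (-K)) (y * exp (-K)) (x * exp (-K)) x x := by
  set E := exp (-K) with hE
  have hy : 0 < y := by rw [hyR]; positivity
  have hK : 0 < K := pos_of_mul_pos_right (by rw [hxyK]; norm_num) (mul_pos hx hy).le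
  have hE0 : 0 < E := exp_pos _
  have hE1 : E ≤ 1 := exp_le_one_iff.mpr (by linarith)
  have hyE : y * E ≤ 1 := by
    have hx2 : x ^ 2 ≤ 1 := by nlinarith
    have hyK' : y ≤ K + 1 := by nlinarith [mul_le_mul_of_nonneg_right hx2 hK.le]
    calc y * E ≤ exp K * exp (-K) := by gcongr; linarith [add_one_le_exp K]
      _ = 1 := by rw [← exp_add, add_neg_cancel, exp_zero]
  have hsqrt : √(x * E * (y * E) / R) = 3 * x ^ 2 * E := by
    rw [← sqrt_sq (by positivity : 0 ≤ 3 * x ^ 2 * E), hyR]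
    congr 1
    field_simp
    ring
  have hlog : log (x * E / x) = -K := by rw [mul_div_cancel_left₀ E hx.ne', hE, log_exp]
  refine ⟨by nlinarith, hyE, by nlinarith, by linarith, by linarith,
    by nlinarith [mul_pos hx hE0], ?_, ?_, ?_, ?_⟩
  · rw [hsqrt]; nlinarith [mul_pos (pow_pos hx 2) hE0]
  · rw [hsqrt]; linarith
  · rw [hlog]; linear_combination (E / 24) * hyK
  · rw [hlog, div_le_iff₀ (by positivity)]
    exact le_of_eq (by linear_combination (-(x ^ 2 * E ^ 2 / 8)) * hxyK)

noncomputable def fifthMonomial (R i j k : ℝ) : ℝ := 2 ^ (i / 5) * 3 ^ (j / 5) * R ^ (k / 5)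

variable {R : ℝ}

lemma fifthMonomial_pos (hR : 0 < R) (i j k : ℝ) : 0 < fifthMonomial R i j k := by
  unfold fifthMonomial; positivity

lemma fifthMonomial_mul (hR : 0 < R) (i j k i' j' k' : ℝ) :
    fifthMonomial R i j k * fifthMonomial R i' j' k' =
      fifthMonomial R (i + i') (j + j') (k + k') := by
  simp only [fifthMonomial, add_div, rpow_add two_pos, rpow_add three_pos, rpow_add hR]
  ring

lemma fifthMonomial_pow (hR : 0 ≤ R) (i j k : ℝ) (n : ℕ) :
    fifthMonomial R i j k ^ n = fifthMonomial R (i * n) (j * n) (k * n) := by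
  simp only [fifthMonomial, mul_pow, mul_div_right_comm _ (n : ℝ),
    rpow_mul_natCast zero_le_two, rpow_mul_natCast zero_le_three, rpow_mul_natCast hR]

lemma fifthMonomial_four_le_one_div_eight (hR : 2 ^ ((19 : ℝ) / 2) * 3 ^ (-(3 : ℝ) / 2) ≤ R) :
    fifthMonomial R 4 (-3) (-2) ≤ 1 / 8 := by
  have hR0 : 0 < R := lt_of_lt_of_le (by positivity) hR
  have hR2 : 2 ^ 19 / 27 ≤ R ^ 2 :=
    calc (2 : ℝ) ^ 19 / 27 = (2 ^ ((19 : ℝ) / 2) * 3 ^ (-(3 : ℝ) / 2)) ^ 2 := by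
          rw [mul_pow, ← rpow_mul_natCast zero_le_two, ← rpow_mul_natCast zero_le_three]
          norm_num [rpow_neg]
      _ ≤ R ^ 2 := by gcongr
  refine le_of_pow_le_pow_left₀ (n := 5) (by norm_num) (by norm_num) ?_
  rw [fifthMonomial_pow hR0.le, div_pow, one_pow]
  norm_num [fifthMonomial, rpow_neg]
  rw [← div_eq_mul_inv, div_le_iff₀ (by positivity)]
  linarith

lemma nine_mul_fifthMonomial_four_pow_three_mul_eq (hR : 0 < R) :
    9 * fifthMonomial R 4 (-3) (-2) ^ 3 * R = fifthMonomial R 12 1 (-1) :=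
  calc 9 * fifthMonomial R 4 (-3) (-2) ^ 3 * R
      = fifthMonomial R 0 10 0 * fifthMonomial R 4 (-3) (-2) ^ 3 * fifthMonomial R 0 0 5 := by
        norm_num [fifthMonomial]
    _ = fifthMonomial R 12 1 (-1) := by
        rw [fifthMonomial_pow hR.le, fifthMonomial_mul hR, fifthMonomial_mul hR]; norm_num

lemma four_mul_fifthMonomial_twelve_eq (hR : 0 < R) :
    4 * fifthMonomial R 12 1 (-1) =
      3 * fifthMonomial R 4 (-3) (-2) ^ 2 * fifthMonomial R 14 2 3 :=
  calc 4 * fifthMonomial R 12 1 (-1)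
      = fifthMonomial R 10 0 0 * fifthMonomial R 12 1 (-1) := by norm_num [fifthMonomial]
    _ = fifthMonomial R 0 5 0 * fifthMonomial R 4 (-3) (-2) ^ 2 * fifthMonomial R 14 2 3 := by
        rw [fifthMonomial_pow hR.le, fifthMonomial_mul hR, fifthMonomial_mul hR,
          fifthMonomial_mul hR]
        norm_num
    _ = 3 * fifthMonomial R 4 (-3) (-2) ^ 2 * fifthMonomial R 14 2 3 := by
        norm_num [fifthMonomial]

lemma fifthMonomial_four_mul_twelve_mul_fourteen (hR : 0 < R) :
    fifthMonomial R 4 (-3) (-2) * fifthMonomial R 12 1 (-1) * fifthMonomial R 14 2 3 = 64 := by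
  rw [fifthMonomial_mul hR, fifthMonomial_mul hR]
  norm_num [fifthMonomial]

end IH3

/-- The IH3 parameter choices satisfy all the constraints of the proof. -/
theorem ih3_parameter_choices (R a b σ δ γ : ℝ)
    (hR : (2 : ℝ) ^ ((19 : ℝ) / 2) * (3 : ℝ) ^ (-(3 : ℝ) / 2) ≤ R)
    (ha : a = (2 : ℝ) ^ ((4 : ℝ) / 5) * (3 : ℝ) ^ (-(3 : ℝ) / 5) * R ^ (-(2 : ℝ) / 5) *
      Real.exp (-((2 : ℝ) ^ ((14 : ℝ) / 5) * (3 : ℝ) ^ ((2 : ℝ) / 5) * R ^ ((3 : ℝ) / 5))))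
    (hσ : σ = (2 : ℝ) ^ ((4 : ℝ) / 5) * (3 : ℝ) ^ (-(3 : ℝ) / 5) * R ^ (-(2 : ℝ) / 5) *
      Real.exp (-((2 : ℝ) ^ ((14 : ℝ) / 5) * (3 : ℝ) ^ ((2 : ℝ) / 5) * R ^ ((3 : ℝ) / 5))))
    (hb : b = (2 : ℝ) ^ ((12 : ℝ) / 5) * (3 : ℝ) ^ ((1 : ℝ) / 5) * R ^ (-(1 : ℝ) / 5) *
      Real.exp (-((2 : ℝ) ^ ((14 : ℝ) / 5) * (3 : ℝ) ^ ((2 : ℝ) / 5) * R ^ ((3 : ℝ) / 5))))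
    (hδ : δ = (2 : ℝ) ^ ((4 : ℝ) / 5) * (3 : ℝ) ^ (-(3 : ℝ) / 5) * R ^ (-(2 : ℝ) / 5))
    (hγ : γ = (2 : ℝ) ^ ((4 : ℝ) / 5) * (3 : ℝ) ^ (-(3 : ℝ) / 5) * R ^ (-(2 : ℝ) / 5)) :
    a ≤ 1 ∧ b ≤ 1 ∧ σ ≤ 1 ∧ δ ≤ 1 ∧ γ ≤ 1 ∧
    8 * a * δ ≤ σ ∧
    (σ + a) * γ ≤ 6 * Real.sqrt (a * b / R) ∧
    σ * δ ≤ (1 / 3) * Real.sqrt (a * b / R) ∧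
    b / 6 ≤ -(1 / 8) * (σ * δ) * Real.log (σ / δ) ∧
    2 * (σ + a) ^ 2 / (b * γ) ≤ -(1 / 8) * (σ * δ) * Real.log (σ / δ) := by
  have hR0 : 0 < R := lt_of_lt_of_le (by positivity) hR
  subst ha hσ hb hδ hγ
  open IH3 in
  exact constraints_of_relations (x := fifthMonomial R 4 (-3) (-2))
    (y := fifthMonomial R 12 1 (-1)) (K := fifthMonomial R 14 2 3) hR0
    (fifthMonomial_pos hR0 _ _ _) (fifthMonomial_four_le_one_div_eight hR)
    (nine_mul_fifthMonomial_four_pow_three_mul_eq hR0).symm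
    (four_mul_fifthMonomial_twelve_eq hR0) (fifthMonomial_four_mul_twelve_mul_fourteen hR0)
end
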